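/- Let ℤ²₀ = ℤ² \ {0}, ℤ²₊ = {k ∈ ℤ²₀ : k₁ > 0, or k₁ = 0 and k₂ > 0}, ℤ²₋ = −ℤ²₊. For k ∈ ℤ²₀ and x ∈ ℝ², set e_k(x) = √2·cos(2π k·x) if k ∈ ℤ²₊ and e_k(x) = √2·sin(2π k·x) if k ∈ ℤ²₋, and set σ_k(x) = (k⊥/|k|)·e_k(x), where k⊥ = (k₂, −k₁) and |k| is the Euclidean norm. Let θ : ℤ²₀ → ℝ satisfy ∑_{k∈ℤ²₀} θ_k² = 1 and θ_k = θ_l whenever |k| = |l|. Then for every x ∈ ℝ² and every vector v ∈ ℝ², the family (θ_k²·(σ_k(x)·v)²)_{k∈ℤ²₀} is summable and ∑_{k∈ℤ²₀} θ_k² (σ_k(x)·v)² = (1/2)|v|². -/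

import Mathlib

/-- Euclidean norm of a lattice point `k ∈ ℤ²`. -/
noncomputable def latNorm (k : ℤ × ℤ) : ℝ := Real.sqrt ((k.1 : ℝ) ^ 2 + (k.2 : ℝ) ^ 2)

/-- The eigenfunctions `e_k` of the Laplacian on the 2D torus, viewed as 1-periodic
functions on `ℝ²`: `e_k(x) = √2 cos(2π k·x)` for `k ∈ ℤ²₊` and `√2 sin(2π k·x)` for
`k ∈ ℤ²₋`, where `ℤ²₊ = {k : k₁ > 0, or k₁ = 0 and k₂ > 0}`. -/
noncomputable def ek (k : ℤ × ℤ) (x : ℝ × ℝ) : ℝ :=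
  if 0 < k.1 ∨ (k.1 = 0 ∧ 0 < k.2)
  then Real.sqrt 2 * Real.cos (2 * Real.pi * ((k.1 : ℝ) * x.1 + (k.2 : ℝ) * x.2))
  else Real.sqrt 2 * Real.sin (2 * Real.pi * ((k.1 : ℝ) * x.1 + (k.2 : ℝ) * x.2))

/-- The divergence-free vector fields `σ_k(x) = (k⊥/|k|) e_k(x)`, `k⊥ = (k₂, −k₁)`. -/
noncomputable def sigmaVF (k : ℤ × ℤ) (x : ℝ × ℝ) : Fin 2 → ℝ :=
  fun i => (![(k.2 : ℝ), -(k.1 : ℝ)] i / latNorm k) * ek k x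

/-!
The weights `θ_k²` are invariant under `k ↦ -k` and `k ↦ k⊥`, so the series may be averaged
over both. Exactly one of `e_k`, `e_{-k}` is a cosine and the other a sine of the same angle, so
averaging over `k ↦ -k` replaces `e_k(x)²` by `1`; averaging over `k ↦ k⊥` then replaces
`(k⊥·v)²` by `((k⊥·v)² + (k·v)²)/2 = |k|²|v|²/2`. What is left is `(1/2)|v|² ∑ θ_k²`.
-/

theorem HasSum.half_of_add_comp_equiv {α : Type*} {f : α → ℝ} {a : ℝ} (hf : ∀ k, 0 ≤ f k)
    (e : α ≃ α) (h : HasSum (fun k => f k + f (e k)) a) : HasSum f (a / 2) := by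
  have hfs : Summable f :=
    h.summable.of_nonneg_of_le hf fun k => le_add_of_nonneg_right (hf (e k))
  have h2 : HasSum (fun k => f k + f (e k)) (∑' k, f k + ∑' k, f k) :=
    hfs.hasSum.add (e.hasSum_iff.2 hfs.hasSum)
  rw [h.unique h2]
  convert hfs.hasSum using 1
  ring

def latPerp : ℤ × ℤ ≃+ ℤ × ℤ where
  toFun k := (k.2, -k.1)
  invFun k := (-k.2, k.1)
  left_inv k := by simp
  right_inv k := by simp
  map_add' k l := by simp [add_comm]

@[simp] lemma latPerp_apply (k : ℤ × ℤ) : latPerp k = (k.2, -k.1) := rfl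

def latDot (k : ℤ × ℤ) (v : Fin 2 → ℝ) : ℝ := k.1 * v 0 + k.2 * v 1

lemma latDot_neg (k : ℤ × ℤ) (v : Fin 2 → ℝ) : latDot (-k) v = -latDot k v := by
  simp only [latDot, Prod.fst_neg, Prod.snd_neg, Int.cast_neg]
  ring

lemma latNorm_sq (k : ℤ × ℤ) : latNorm k ^ 2 = (k.1 : ℝ) ^ 2 + (k.2 : ℝ) ^ 2 :=
  Real.sq_sqrt (by positivity)

lemma latNorm_ne_zero {k : ℤ × ℤ} (hk : k ≠ 0) : latNorm k ≠ 0 := by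
  rw [latNorm, Real.sqrt_ne_zero (by positivity)]
  contrapose! hk
  have h1 : (k.1 : ℝ) = 0 := by nlinarith [sq_nonneg (k.1 : ℝ), sq_nonneg (k.2 : ℝ)]
  have h2 : (k.2 : ℝ) = 0 := by nlinarith [sq_nonneg (k.1 : ℝ), sq_nonneg (k.2 : ℝ)]
  exact Prod.ext (by exact_mod_cast h1) (by exact_mod_cast h2)

lemma latNorm_neg (k : ℤ × ℤ) : latNorm (-k) = latNorm k := by
  simp [latNorm]

lemma latNorm_latPerp (k : ℤ × ℤ) : latNorm (latPerp k) = latNorm k := by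
  simp [latNorm, add_comm]

lemma latDot_sq_add_latDot_latPerp_sq (k : ℤ × ℤ) (v : Fin 2 → ℝ) :
    latDot k v ^ 2 + latDot (latPerp k) v ^ 2 = latNorm k ^ 2 * ∑ i, v i ^ 2 := by
  simp only [latDot, latPerp_apply, latNorm_sq, Fin.sum_univ_two, Int.cast_neg]
  ring

lemma sq_latDot_latPerp_div_add_latPerp {k : ℤ × ℤ} (hk : k ≠ 0) (v : Fin 2 → ℝ) :
    (latDot (latPerp k) v / latNorm k) ^ 2
      + (latDot (latPerp (latPerp k)) v / latNorm (latPerp k)) ^ 2 = ∑ i, v i ^ 2 := by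
  have hk0 := latNorm_ne_zero hk
  rw [latNorm_latPerp, div_pow, div_pow, ← add_div, div_eq_iff (pow_ne_zero 2 hk0),
    latDot_sq_add_latDot_latPerp_sq, latNorm_latPerp, mul_comm]

lemma ek_sq_add_ek_neg_sq {k : ℤ × ℤ} (hk : k ≠ 0) (x : ℝ × ℝ) :
    ek k x ^ 2 + ek (-k) x ^ 2 = 2 := by
  have hk' : k.1 ≠ 0 ∨ k.2 ≠ 0 := by
    by_contra! h
    exact hk (Prod.ext h.1 h.2)
  simp only [ek, Prod.fst_neg, Prod.snd_neg, Int.cast_neg, neg_mul, ← neg_add, mul_neg,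
    Real.cos_neg, Real.sin_neg]
  have := Real.sin_sq_add_cos_sq (2 * Real.pi * (k.1 * x.1 + k.2 * x.2))
  have h2 : Real.sqrt 2 ^ 2 = 2 := Real.sq_sqrt (by norm_num)
  split_ifs <;> first | omega | nlinarith

lemma sum_sigmaVF_mul (k : ℤ × ℤ) (x : ℝ × ℝ) (v : Fin 2 → ℝ) :
    ∑ i, sigmaVF k x i * v i = latDot (latPerp k) v / latNorm k * ek k x := by
  simp only [sigmaVF, latDot, latPerp_apply, Fin.sum_univ_two, Fin.isValue,
    Matrix.cons_val_zero, Matrix.cons_val_one, Int.cast_neg]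
  ring

lemma sq_sum_sigmaVF_mul_add_neg {k : ℤ × ℤ} (hk : k ≠ 0) (x : ℝ × ℝ) (v : Fin 2 → ℝ) :
    (∑ i, sigmaVF k x i * v i) ^ 2 + (∑ i, sigmaVF (-k) x i * v i) ^ 2
      = 2 * (latDot (latPerp k) v / latNorm k) ^ 2 := by
  rw [sum_sigmaVF_mul, sum_sigmaVF_mul, map_neg, latDot_neg, latNorm_neg]
  linear_combination (latDot (latPerp k) v / latNorm k) ^ 2 * ek_sq_add_ek_neg_sq hk x

/-- Quadratic-form version of the covariance identity: under the
assumptions `∑ θ_k² = 1` and `θ_k = θ_l` for `|k| = |l|`, for every `x, v ∈ ℝ²` one has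
`∑_k θ_k² (σ_k(x)·v)² = (1/2)|v|²`. -/
theorem stmt_5 (θ : {k : ℤ × ℤ // k ≠ 0} → ℝ)
    (hθ1 : HasSum (fun k : {k : ℤ × ℤ // k ≠ 0} => θ k ^ 2) 1)
    (hθ2 : ∀ k l : {k : ℤ × ℤ // k ≠ 0}, latNorm k.1 = latNorm l.1 → θ k = θ l)
    (x : ℝ × ℝ) (v : Fin 2 → ℝ) :
    HasSum (fun k : {k : ℤ × ℤ // k ≠ 0} =>
        θ k ^ 2 * (∑ i : Fin 2, sigmaVF k.1 x i * v i) ^ 2)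
      ((1/2) * ∑ i : Fin 2, v i ^ 2) := by
  let neg : {k : ℤ × ℤ // k ≠ 0} ≃ {k : ℤ × ℤ // k ≠ 0} :=
    (Equiv.neg _).subtypeEquiv fun _ => neg_ne_zero.symm
  let perp : {k : ℤ × ℤ // k ≠ 0} ≃ {k : ℤ × ℤ // k ≠ 0} :=
    latPerp.toEquiv.subtypeEquiv fun _ => (map_ne_zero_iff latPerp latPerp.injective).symm
  set f := fun k : {k : ℤ × ℤ // k ≠ 0} => θ k ^ 2 * (∑ i : Fin 2, sigmaVF k.1 x i * v i) ^ 2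
  set g := fun k : {k : ℤ × ℤ // k ≠ 0} =>
    θ k ^ 2 * (2 * (latDot (latPerp k.1) v / latNorm k.1) ^ 2)
  have hfg : ∀ k, f k + f (neg k) = g k := fun k => by
    have hθ : θ (neg k) = θ k := hθ2 _ _ (latNorm_neg k.1)
    have hk : (neg k).1 = -k.1 := rfl
    simp only [f, g, hθ, hk]
    linear_combination θ k ^ 2 * sq_sum_sigmaVF_mul_add_neg k.2 x v
  have hg : ∀ k, g k + g (perp k) = θ k ^ 2 * (2 * ∑ i, v i ^ 2) := fun k => by
    have hθ : θ (perp k) = θ k := hθ2 _ _ (latNorm_latPerp k.1)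
    have hk : (perp k).1 = latPerp k.1 := rfl
    simp only [g, hθ, hk]
    linear_combination 2 * θ k ^ 2 * sq_latDot_latPerp_div_add_latPerp k.2 v
  have hgsum : HasSum g (∑ i, v i ^ 2) := by
    convert HasSum.half_of_add_comp_equiv (f := g) (fun k => by positivity) perp
      (by simpa only [hg, one_mul] using hθ1.mul_right (2 * ∑ i, v i ^ 2)) using 1
    ring
  convert HasSum.half_of_add_comp_equiv (f := f) (fun k => by positivity) neg
    (by simpa only [hfg] using hgsum) using 1
  ring
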